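/- Consider the (1+1) elitist EA and a (μ+μ) elitist EA with μ ≥ 2 using the same mutation operator M on the same fitness function f, as in the model below, with S_non nonempty. Let x_ρ ∈ S_non maximize P¹(x,x) over x ∈ S_non. Suppose that for every population Z ∈ S^μ_same(x_ρ) containing no bridgeable point of x_ρ, the one-step transition probability of the (μ+μ) EA from Z into the set S^μ_bridge(x_ρ) of populations containing a bridgeable point of x_ρ is zero (so no road from X_ρ = (x_ρ,…,x_ρ) to S^μ_high(x_ρ) passes through a bridge). Then no superlinear ρ-scalability takes place for this μ: 1 − ρ(Q^μ) ≤ μ(1 − P¹(x_ρ,x_ρ)) = μ(1 − ρ(Q¹)). -/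

import Mathlib

open Matrix

/-- The spectral radius of a real square matrix: the maximum of the moduli of its
complex eigenvalues (`0` for an empty matrix, via `sSup ∅ = 0`). -/
noncomputable def specRad {n : Type*} [Fintype n] [DecidableEq n] (A : Matrix n n ℝ) : ℝ :=
  sSup ((fun z => ‖z‖) '' spectrum ℂ (A.map Complex.ofReal))

variable {S : Type*} [Fintype S] [LinearOrder S]

/-- `x` is an optimal individual for the fitness function `f`. -/
abbrev Sopt (f : S → ℝ) (x : S) : Prop := ∀ y, f y ≤ f x

/-- `x` is a non-optimal individual for the fitness function `f`. -/
abbrev Snon (f : S → ℝ) (x : S) : Prop := ¬ Sopt f x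

/-- `Mhigh f M x y` is the probability `M(y, S¹_high(x))` that `y` mutates into the
set of individuals strictly fitter than `x`. -/
noncomputable abbrev Mhigh (f : S → ℝ) (M : Matrix S S ℝ) (x y : S) : ℝ :=
  ∑ z ∈ Finset.univ.filter (fun z => f x < f z), M y z

/-- `y` is a bridgeable point of `x`: `y ≠ x`, `f y ≤ f x`, and `y` is at least as
likely as `x` to mutate into `S¹_high(x)`. -/
abbrev Bridgeable (f : S → ℝ) (M : Matrix S S ℝ) (x y : S) : Prop :=
  y ≠ x ∧ f y ≤ f x ∧ Mhigh f M x x ≤ Mhigh f M x y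

/-- The transition matrix of the `(1+1)` elitist EA with mutation operator `M` and
fitness `f`: move to a strictly fitter mutant, otherwise stay put. -/
noncomputable def P1 (f : S → ℝ) (M : Matrix S S ℝ) : Matrix S S ℝ :=
  Matrix.of fun x z =>
    if f x < f z then M x z
    else if z = x then ∑ y ∈ Finset.univ.filter (fun y => f y ≤ f x), M x y
    else 0

/-- The restriction `Q¹` of the `(1+1)` elitist EA transition matrix to the
non-optimal states. -/
noncomputable def Q1 (f : S → ℝ) (M : Matrix S S ℝ) :
    Matrix {x : S // Snon f x} {x : S // Snon f x} ℝ :=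
  Matrix.of fun a b => P1 f M a.1 b.1

/-- The transition matrix `P^μ` of the `(μ+μ)` EA with mutation operator `M` and
selection operator `PS`: mutate each individual independently, then select. -/
noncomputable def Pmu {μ : ℕ} (M : Matrix S S ℝ)
    (PS : (Fin μ → S) → (Fin μ → S) → (Fin μ → S) → ℝ) :
    Matrix (Fin μ → S) (Fin μ → S) ℝ :=
  Matrix.of fun X Z => ∑ Y : Fin μ → S, (∏ i, M (X i) (Y i)) * PS X Y Z

/-- The restriction `Q^μ` of the `(μ+μ)` EA transition matrix to the set `S^μ_non` of
populations containing no optimal individual. -/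
noncomputable def Qmu {μ : ℕ} (f : S → ℝ) (M : Matrix S S ℝ)
    (PS : (Fin μ → S) → (Fin μ → S) → (Fin μ → S) → ℝ) :
    Matrix {X : Fin μ → S // ∀ i, Snon f (X i)} {X : Fin μ → S // ∀ i, Snon f (X i)} ℝ :=
  Matrix.of fun A B => Pmu M PS A.1 B.1

/-! `Q¹` is triangular once states are ordered by fitness, so its spectral radius is its largest
diagonal entry `P¹(x_ρ,x_ρ)`. For the `(μ+μ)` EA, let `T` be the set of non-optimal populations
whose best individual is `x_ρ` and which contain no bridgeable point of `x_ρ`. An individual of a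
population in `T` is at most as likely as `x_ρ` to mutate above `f x_ρ`, so by the Weierstrass
product inequality all `μ` mutants stay at fitness `≤ f x_ρ` with probability at least
`1 - μ (1 - P¹(x_ρ,x_ρ))`. Elitism then keeps `x_ρ` as the best individual, and by hypothesis the
new population almost surely has no bridgeable point, i.e. it lies in `T` again. Finally, by
Gelfand's formula, a nonnegative matrix whose rows indexed by a nonempty set `T` have at least
mass `c` inside `T` has spectral radius at least `c`. -/

open scoped NNReal ENNReal
open Filter

theorem le_spectralRadius_of_pow_le_nnnorm {A : Type*} [NormedRing A] [NormedAlgebra ℂ A]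
    [CompleteSpace A] (a : A) (c : ℝ≥0) (h : ∀ k : ℕ, c ^ k ≤ ‖a ^ k‖₊) :
    (c : ℝ≥0∞) ≤ spectralRadius ℂ a := by
  refine ge_of_tendsto (spectrum.pow_nnnorm_pow_one_div_tendsto_nhds_spectralRadius a) ?_
  filter_upwards [eventually_gt_atTop 0] with k hk
  rw [one_div, ENNReal.le_rpow_inv_iff (by positivity), ENNReal.rpow_natCast]
  exact_mod_cast h k

theorem Finset.one_sub_sum_le_prod_one_sub {ι : Type*} (s : Finset ι) {a : ι → ℝ}
    (h0 : ∀ i ∈ s, 0 ≤ a i) (h1 : ∀ i ∈ s, a i ≤ 1) :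
    1 - ∑ i ∈ s, a i ≤ ∏ i ∈ s, (1 - a i) := by
  classical
  induction s using Finset.induction with
  | empty => simp
  | insert x s hx ih =>
    rw [sum_insert hx, prod_insert hx]
    have ih' := ih (fun i hi => h0 i (mem_insert_of_mem hi)) fun i hi => h1 i (mem_insert_of_mem hi)
    have hsum : 0 ≤ ∑ i ∈ s, a i := sum_nonneg fun i hi => h0 i (mem_insert_of_mem hi)
    have hx0 := h0 x (mem_insert_self x s)
    have hx1 := h1 x (mem_insert_self x s)
    nlinarith [mul_le_mul_of_nonneg_left ih' (sub_nonneg.2 hx1)]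

namespace Matrix

variable {n : Type*} [Fintype n] [DecidableEq n]

theorem specRad_nonneg (A : Matrix n n ℝ) : 0 ≤ specRad A :=
  Real.sSup_nonneg (by rintro _ ⟨z, _, rfl⟩; exact norm_nonneg z)

theorem spectralRadius_map_ofReal_le (A : Matrix n n ℝ) :
    spectralRadius ℂ (A.map Complex.ofReal) ≤ ENNReal.ofReal (specRad A) := by
  refine iSup₂_le fun z hz => ?_
  rw [← ENNReal.ofReal_coe_nnreal, coe_nnnorm]
  exact ENNReal.ofReal_le_ofReal <|
    le_csSup ((A.map Complex.ofReal).finite_spectrum.image _).bddAbove ⟨z, hz, rfl⟩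

attribute [local instance] Matrix.linftyOpNormedRing Matrix.linftyOpNormedAlgebra in
theorem le_specRad_of_pow_le_sum_abs (A : Matrix n n ℝ) {c : ℝ} (hc : 0 ≤ c) (i : n)
    (h : ∀ k : ℕ, c ^ k ≤ ∑ j, |(A ^ k) i j|) : c ≤ specRad A := by
  have hnorm : ∀ k : ℕ, c.toNNReal ^ k ≤ ‖A.map Complex.ofReal ^ k‖₊ := fun k => by
    have hpow : A.map Complex.ofReal ^ k = (A ^ k).map Complex.ofReal :=
      (A.map_pow Complex.ofRealHom k).symm
    rw [hpow, linfty_opNNNorm_def, ← NNReal.coe_le_coe]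
    refine le_trans ?_ (NNReal.coe_le_coe.2 (Finset.le_sup (Finset.mem_univ i)))
    simpa [Real.coe_toNNReal _ hc] using h k
  have := (le_spectralRadius_of_pow_le_nnnorm _ _ hnorm).trans (spectralRadius_map_ofReal_le A)
  rwa [ENNReal.ofReal, ENNReal.coe_le_coe, Real.toNNReal_le_toNNReal_iff (specRad_nonneg A)] at this

theorem pow_le_sum_pow_of_le_sum {A : Matrix n n ℝ} (hA : ∀ i j, 0 ≤ A i j) {s : Finset n}
    {c : ℝ} (hc : 0 ≤ c) (h : ∀ i ∈ s, c ≤ ∑ j ∈ s, A i j) (k : ℕ) :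
    ∀ i ∈ s, c ^ k ≤ ∑ j ∈ s, (A ^ k) i j := by
  induction k with
  | zero => intro i hi; simp [one_apply, hi]
  | succ k ih =>
    intro i hi
    calc c ^ (k + 1) = c * c ^ k := pow_succ' c k
      _ ≤ (∑ l ∈ s, A i l) * c ^ k := mul_le_mul_of_nonneg_right (h i hi) (by positivity)
      _ ≤ ∑ l ∈ s, A i l * ∑ j ∈ s, (A ^ k) l j := by
        rw [Finset.sum_mul]
        exact Finset.sum_le_sum fun l hl => mul_le_mul_of_nonneg_left (ih l hl) (hA i l)
      _ ≤ ∑ l, A i l * ∑ j ∈ s, (A ^ k) l j :=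
        Finset.sum_le_sum_of_subset_of_nonneg (Finset.subset_univ s) fun l _ _ =>
          mul_nonneg (hA i l) (Finset.sum_nonneg fun j _ => pow_apply_nonneg hA k l j)
      _ = ∑ j ∈ s, (A ^ (k + 1)) i j := by
        simp_rw [pow_succ', mul_apply, Finset.mul_sum]
        exact Finset.sum_comm

theorem le_specRad_of_le_sum {A : Matrix n n ℝ} (hA : ∀ i j, 0 ≤ A i j) {s : Finset n}
    (hs : s.Nonempty) {c : ℝ} (h : ∀ i ∈ s, c ≤ ∑ j ∈ s, A i j) : c ≤ specRad A := by
  rcases lt_or_ge c 0 with hc | hc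
  · exact hc.le.trans (specRad_nonneg A)
  obtain ⟨i, hi⟩ := hs
  refine le_specRad_of_pow_le_sum_abs A hc i fun k => ?_
  calc c ^ k ≤ ∑ j ∈ s, (A ^ k) i j := pow_le_sum_pow_of_le_sum hA hc h k i hi
    _ ≤ ∑ j ∈ s, |(A ^ k) i j| := Finset.sum_le_sum fun j _ => le_abs_self _
    _ ≤ ∑ j, |(A ^ k) i j| :=
      Finset.sum_le_sum_of_subset_of_nonneg (Finset.subset_univ s) fun j _ _ => abs_nonneg _

theorem spectrum_eq_range_diag_of_isUpperTriangular {K : Type*} [Field K] [LinearOrder n]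
    {M : Matrix n n K} (h : M.IsUpperTriangular) : spectrum K M = Set.range M.diag := by
  ext r
  rw [mem_spectrum_iff_isRoot_charpoly, charpoly_of_isUpperTriangular M h, Polynomial.isRoot_prod]
  simp [sub_eq_zero, eq_comm]

theorem spectrum_eq_range_diag_of_blockTriangular {K α : Type*} [Field K] [LinearOrder α]
    {M : Matrix n n K} {b : n → α} (hb : Function.Injective b) (h : M.BlockTriangular b) :
    spectrum K M = Set.range M.diag :=
  letI := LinearOrder.lift' b hb
  spectrum_eq_range_diag_of_isUpperTriangular h

end Matrix

section Mutation

variable {α : Type*} [Fintype α] (f : α → ℝ) (M : Matrix α α ℝ)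

theorem sum_filter_le_add_Mhigh (hM1 : ∀ x, ∑ y, M x y = 1) (x z : α) :
    ∑ y ∈ Finset.univ.filter (fun y => f y ≤ f x), M z y + Mhigh f M x z = 1 := by
  simp only [Mhigh, ← not_le, Finset.sum_filter_add_sum_filter_not, hM1]

theorem Pmu_nonneg {μ : ℕ} (PS : (Fin μ → α) → (Fin μ → α) → (Fin μ → α) → ℝ)
    (hM0 : ∀ x y, 0 ≤ M x y) (hPS0 : ∀ X Y Z, 0 ≤ PS X Y Z) (X Z : Fin μ → α) :
    0 ≤ Pmu M PS X Z :=
  Finset.sum_nonneg fun _ _ => mul_nonneg (Finset.prod_nonneg fun _ _ => hM0 _ _) (hPS0 _ _ _)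

theorem sum_Pmu_eq {μ : ℕ} (PS : (Fin μ → α) → (Fin μ → α) → (Fin μ → α) → ℝ)
    (T : Finset (Fin μ → α)) (Z : Fin μ → α) :
    ∑ W ∈ T, Pmu M PS Z W = ∑ Y, (∏ i, M (Z i) (Y i)) * ∑ W ∈ T, PS Z Y W := by
  simp only [Pmu, Matrix.of_apply, Finset.mul_sum]
  exact Finset.sum_comm

end Mutation

section OnePlusOne

variable (f : S → ℝ) (M : Matrix S S ℝ)

theorem P1_apply_self (x : S) :
    P1 f M x x = ∑ y ∈ Finset.univ.filter (fun y => f y ≤ f x), M x y := by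
  simp [P1]

theorem one_sub_P1_apply_self (hM1 : ∀ x, ∑ y, M x y = 1) (x : S) :
    1 - P1 f M x x = Mhigh f M x x := by
  linarith [P1_apply_self f M x, sum_filter_le_add_Mhigh f M hM1 x x]

theorem Mhigh_le_of_not_bridgeable {x z : S} (hz : f z ≤ f x) (hb : ¬ Bridgeable f M x z) :
    Mhigh f M x z ≤ Mhigh f M x x := by
  by_cases hzx : z = x
  · rw [hzx]
  · simp only [Bridgeable, not_and, not_le] at hb
    exact (hb hzx hz).le

theorem P1_blockTriangular : (P1 f M).BlockTriangular fun x => toLex (f x, x) := by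
  intro x z hzx
  have hne : z ≠ x := fun h => (h ▸ hzx).ne rfl
  have hle : f z ≤ f x := (Prod.Lex.toLex_le_toLex.1 hzx.le).elim le_of_lt (·.1.le)
  simp [P1, not_lt.2 hle, hne]

theorem specRad_Q1 (hM0 : ∀ x y, 0 ≤ M x y) {xρ : S} (hxρ : Snon f xρ)
    (hxρmax : ∀ x, Snon f x → P1 f M x x ≤ P1 f M xρ xρ) :
    specRad (Q1 f M) = P1 f M xρ xρ := by
  have hspec : spectrum ℂ ((Q1 f M).map Complex.ofReal) =
      Set.range fun a : {x // Snon f x} => (P1 f M a.1 a.1 : ℂ) :=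
    Matrix.spectrum_eq_range_diag_of_blockTriangular (b := fun a => toLex (f a.1, a.1))
      (fun a b h => Subtype.ext (congrArg (·.2) (toLex.injective h)))
      (((P1_blockTriangular f M).submatrix (f := Subtype.val)).map Complex.ofRealHom)
  have hnorm : (fun z : ℂ => ‖z‖) '' spectrum ℂ ((Q1 f M).map Complex.ofReal) =
      Set.range fun a : {x // Snon f x} => P1 f M a.1 a.1 := by
    rw [hspec, ← Set.range_comp]
    congr 1
    ext a
    rw [Function.comp_apply, Complex.norm_real, Real.norm_eq_abs, abs_of_nonneg]
    rw [P1_apply_self]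
    exact Finset.sum_nonneg fun y _ => hM0 a.1 y
  rw [specRad, hnorm]
  exact IsGreatest.csSup_eq ⟨⟨⟨xρ, hxρ⟩, rfl⟩, by rintro _ ⟨a, rfl⟩; exact hxρmax a.1 a.2⟩

end OnePlusOne
section MuPlusMu

variable {μ : ℕ} (f : S → ℝ) (M : Matrix S S ℝ) (best : (Fin μ → S) → S)
  (PS : (Fin μ → S) → (Fin μ → S) → (Fin μ → S) → ℝ)

structure IsElitistSelection : Prop where
  nonneg : ∀ X Y Z, 0 ≤ PS X Y Z
  sum_eq_one : ∀ X Y, ∑ Z, PS X Y Z = 1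
  mem_parents : ∀ X Y Z, 0 < PS X Y Z → ∀ i, (∃ j, Z i = X j) ∨ (∃ j, Z i = Y j)
  best_eq : ∀ X Y Z, 0 < PS X Y Z →
    (f (best X) < f (best Y) → best Z = best Y) ∧ (¬ f (best X) < f (best Y) → best Z = best X)

/-- Membership in `S^μ_same(x) ∖ S^μ_bridge(x)`. -/
abbrev SameNoBridge (x : S) (W : Fin μ → S) : Prop :=
  (∀ i, Snon f (W i)) ∧ best W = x ∧ ¬ ∃ i, Bridgeable f M x (W i)

theorem one_sub_mul_Mhigh_le_prod (hM0 : ∀ x y, 0 ≤ M x y) (hM1 : ∀ x, ∑ y, M x y = 1)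
    {x : S} {Z : Fin μ → S} (hZ : ∀ i, f (Z i) ≤ f x) (hZb : ∀ i, ¬ Bridgeable f M x (Z i)) :
    1 - μ * Mhigh f M x x ≤ ∏ i, ∑ y ∈ Finset.univ.filter (fun y => f y ≤ f x), M (Z i) y := by
  have hnonneg : ∀ z, 0 ≤ Mhigh f M x z := fun z => Finset.sum_nonneg fun y _ => hM0 z y
  have hsum : ∑ i, Mhigh f M x (Z i) ≤ μ * Mhigh f M x x := by
    simpa using Finset.sum_le_card_nsmul Finset.univ _ _ fun i _ =>
      Mhigh_le_of_not_bridgeable f M (hZ i) (hZb i)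
  simp_rw [eq_sub_of_add_eq (sum_filter_le_add_Mhigh f M hM1 x _)]
  refine (sub_le_sub_left hsum 1).trans
    (Finset.one_sub_sum_le_prod_one_sub _ (fun i _ => hnonneg (Z i)) fun i _ => ?_)
  linarith [sum_filter_le_add_Mhigh f M hM1 x (Z i),
    Finset.sum_nonneg fun y (_ : y ∈ Finset.univ.filter (fun y => f y ≤ f x)) => hM0 (Z i) y]

theorem sameNoBridge_or_bridge_of_PS_pos
    (hbest_mem : ∀ X, ∃ i, best X = X i) (hbest_max : ∀ X i, f (X i) ≤ f (best X))
    (hPS : IsElitistSelection f best PS)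
    {x : S} (hx : Snon f x) {Z Y W : Fin μ → S} (hZ : best Z = x) (hY : ∀ j, f (Y j) ≤ f x)
    (hW : 0 < PS Z Y W) :
    SameNoBridge f M best x W ∨ ∃ i, Bridgeable f M x (W i) := by
  have hWx : ∀ i, f (W i) ≤ f x := fun i => by
    rcases hPS.mem_parents Z Y W hW i with ⟨j, hj⟩ | ⟨j, hj⟩
    · exact hj ▸ hZ ▸ hbest_max Z j
    · exact hj ▸ hY j
  have hbestW : best W = x := by
    obtain ⟨j, hj⟩ := hbest_mem Y
    exact hZ ▸ (hPS.best_eq Z Y W hW).2 (by rw [hZ, hj]; exact not_lt.2 (hY j))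
  by_cases hb : ∃ i, Bridgeable f M x (W i)
  · exact Or.inr hb
  · exact Or.inl ⟨fun i hopt => hx fun z => (hopt z).trans (hWx i), hbestW, hb⟩

theorem sum_PS_sameNoBridge_add_sum_PS_bridge
    (hbest_mem : ∀ X, ∃ i, best X = X i) (hbest_max : ∀ X i, f (X i) ≤ f (best X))
    (hPS : IsElitistSelection f best PS)
    {x : S} (hx : Snon f x) {Z Y : Fin μ → S} (hZ : best Z = x) (hY : ∀ j, f (Y j) ≤ f x) :
    ∑ W ∈ Finset.univ.filter (SameNoBridge f M best x), PS Z Y W +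
      ∑ W ∈ Finset.univ.filter (fun W : Fin μ → S => ∃ i, Bridgeable f M x (W i)), PS Z Y W
      = 1 := by
  rw [← Finset.sum_union (Finset.disjoint_filter.2 fun W _ h => h.2.2), ← hPS.sum_eq_one Z Y]
  refine Finset.sum_subset (Finset.subset_univ _) fun W _ hW => ?_
  by_contra hne
  have hpos := (hPS.nonneg Z Y W).lt_of_ne (Ne.symm hne)
  exact hW (Finset.mem_union.2 <| by
    simpa using sameNoBridge_or_bridge_of_PS_pos f M best PS hbest_mem hbest_max hPS hx hZ hY hpos)

theorem le_sum_Pmu_sameNoBridge (hM0 : ∀ x y, 0 ≤ M x y) (hM1 : ∀ x, ∑ y, M x y = 1)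
    (hbest_mem : ∀ X, ∃ i, best X = X i) (hbest_max : ∀ X i, f (X i) ≤ f (best X))
    (hPS : IsElitistSelection f best PS) {x : S} (hx : Snon f x)
    (hnobridge : ∀ Z : Fin μ → S, (∀ i, Snon f (Z i)) → best Z = x →
      (¬ ∃ i, Bridgeable f M x (Z i)) →
      ∑ W ∈ Finset.univ.filter (fun W : Fin μ → S => ∃ i, Bridgeable f M x (W i)),
        Pmu M PS Z W = 0)
    {Z : Fin μ → S} (hZ : SameNoBridge f M best x Z) :
    1 - μ * Mhigh f M x x ≤ ∑ W ∈ Finset.univ.filter (SameNoBridge f M best x), Pmu M PS Z W := by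
  set low := Finset.univ.filter fun y => f y ≤ f x
  set A := Finset.univ.filter (SameNoBridge f M best x)
  set B := Finset.univ.filter fun W : Fin μ → S => ∃ i, Bridgeable f M x (W i)
  have hZx : ∀ i, f (Z i) ≤ f x := fun i => hZ.2.1 ▸ hbest_max Z i
  calc 1 - μ * Mhigh f M x x ≤ ∏ i, ∑ y ∈ low, M (Z i) y :=
        one_sub_mul_Mhigh_le_prod f M hM0 hM1 hZx fun i hb => hZ.2.2 ⟨i, hb⟩
    _ = ∑ Y ∈ Fintype.piFinset fun _ => low,
          (∏ i, M (Z i) (Y i)) * (∑ W ∈ A, PS Z Y W + ∑ W ∈ B, PS Z Y W) := by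
        rw [Finset.prod_univ_sum]
        refine Finset.sum_congr rfl fun Y hY => ?_
        rw [sum_PS_sameNoBridge_add_sum_PS_bridge f M best PS hbest_mem hbest_max hPS hx hZ.2.1
          fun j => by simpa [low] using Fintype.mem_piFinset.1 hY j, mul_one]
    _ ≤ ∑ Y, (∏ i, M (Z i) (Y i)) * (∑ W ∈ A, PS Z Y W + ∑ W ∈ B, PS Z Y W) :=
        Finset.sum_le_sum_of_subset_of_nonneg (Finset.subset_univ _) fun Y _ _ =>
          mul_nonneg (Finset.prod_nonneg fun i _ => hM0 _ _) <| add_nonneg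
            (Finset.sum_nonneg fun W _ => hPS.nonneg Z Y W)
            (Finset.sum_nonneg fun W _ => hPS.nonneg Z Y W)
    _ = ∑ W ∈ A, Pmu M PS Z W + ∑ W ∈ B, Pmu M PS Z W := by
        simp only [sum_Pmu_eq, mul_add, Finset.sum_add_distrib]
    _ = ∑ W ∈ A, Pmu M PS Z W := by rw [hnobridge Z hZ.1 hZ.2.1 hZ.2.2, add_zero]

end MuPlusMu

theorem stmt_11_general (f : S → ℝ) (M : Matrix S S ℝ)
    (hM0 : ∀ x y, 0 ≤ M x y) (hM1 : ∀ x, ∑ y, M x y = 1)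
    (μ : ℕ)
    (best : (Fin μ → S) → S)
    (hbest_mem : ∀ X, ∃ i, best X = X i)
    (hbest_max : ∀ X i, f (X i) ≤ f (best X))
    (PS : (Fin μ → S) → (Fin μ → S) → (Fin μ → S) → ℝ)
    (hPS0 : ∀ X Y Z, 0 ≤ PS X Y Z)
    (hPS1 : ∀ X Y, ∑ Z : Fin μ → S, PS X Y Z = 1)
    (hPS_src : ∀ X Y Z, 0 < PS X Y Z → ∀ i, (∃ j, Z i = X j) ∨ (∃ j, Z i = Y j))
    (hPS_elite : ∀ X Y Z, 0 < PS X Y Z →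
      (f (best X) < f (best Y) → best Z = best Y) ∧
      (¬ f (best X) < f (best Y) → best Z = best X))
    (xρ : S) (hxρ : Snon f xρ)
    (hxρmax : ∀ x, Snon f x → P1 f M x x ≤ P1 f M xρ xρ)
    (hnobridge : ∀ Z : Fin μ → S, (∀ i, Snon f (Z i)) → best Z = xρ →
      (¬ ∃ i, Bridgeable f M xρ (Z i)) →
      ∑ W ∈ Finset.univ.filter (fun W : Fin μ → S => ∃ i, Bridgeable f M xρ (W i)),
        Pmu M PS Z W = 0) :
    1 - specRad (Qmu f M PS) ≤ (μ : ℝ) * (1 - P1 f M xρ xρ) ∧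
      (μ : ℝ) * (1 - P1 f M xρ xρ) = (μ : ℝ) * (1 - specRad (Q1 f M)) := by
  have hPS : IsElitistSelection f best PS := ⟨hPS0, hPS1, hPS_src, hPS_elite⟩
  refine ⟨?_, by rw [specRad_Q1 f M hM0 hxρ hxρmax]⟩
  let A := (Finset.univ.filter (SameNoBridge f M best xρ)).subtype fun X => ∀ i, Snon f (X i)
  have hconst : (⟨fun _ => xρ, fun _ => hxρ⟩ : {X : Fin μ → S // ∀ i, Snon f (X i)}) ∈ A := by
    obtain ⟨i, hi⟩ := hbest_mem fun _ => xρ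
    refine Finset.mem_subtype.2 (Finset.mem_filter.2 ⟨Finset.mem_univ _, fun _ => hxρ, hi, ?_⟩)
    rintro ⟨_, hne, -⟩
    exact hne rfl
  have hrow : ∀ Z ∈ A, 1 - μ * Mhigh f M xρ xρ ≤ ∑ W ∈ A, Qmu f M PS Z W := fun Z hZ => by
    have hmap : A.map (Function.Embedding.subtype _) =
        Finset.univ.filter (SameNoBridge f M best xρ) :=
      Finset.subtype_map_of_mem fun W hW => (Finset.mem_filter.1 hW).2.1
    have hsum : ∑ W ∈ A, Qmu f M PS Z W =
        ∑ W ∈ A.map (Function.Embedding.subtype _), Pmu M PS Z.1 W := by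
      rw [Finset.sum_map]; rfl
    rw [hsum, hmap]
    exact le_sum_Pmu_sameNoBridge f M best PS hM0 hM1 hbest_mem hbest_max hPS hxρ hnobridge
      (Finset.mem_filter.1 (Finset.mem_subtype.1 hZ)).2
  have hQ0 : ∀ Z W, 0 ≤ Qmu f M PS Z W := fun Z W => Pmu_nonneg M PS hM0 hPS0 Z.1 W.1
  rw [one_sub_P1_apply_self f M hM1, sub_le_comm]
  exact Matrix.le_specRad_of_le_sum hQ0 ⟨_, hconst⟩ hrow

/-- for a `(1+1)` elitist EA and a `(μ+μ)` elitist EA (`μ ≥ 2`) with the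
same mutation operator `M` on the same fitness function `f`, `S_non ≠ ∅`, letting
`x_ρ` maximize `P¹(x,x)` over non-optimal `x`: if from every population in
`S^μ_same(x_ρ)` containing no bridgeable point of `x_ρ` the one-step transition
probability into the set `S^μ_bridge(x_ρ)` of populations containing a bridgeable
point of `x_ρ` is zero (no road over a bridge), then no superlinear ρ-scalability takes
place: `1 - ρ(Q^μ) ≤ μ(1 - P¹(x_ρ,x_ρ)) = μ(1 - ρ(Q¹))`. -/
theorem stmt_11 (f : S → ℝ) (M : Matrix S S ℝ)
    (hM0 : ∀ x y, 0 ≤ M x y) (hM1 : ∀ x, ∑ y, M x y = 1)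
    (μ : ℕ) (hμ : 2 ≤ μ)
    (best : (Fin μ → S) → S)
    (hbest_mem : ∀ X, ∃ i, best X = X i)
    (hbest_max : ∀ X i, f (X i) ≤ f (best X))
    (hbest_tie : ∀ X i, f (X i) = f (best X) → X i ≤ best X)
    (PS : (Fin μ → S) → (Fin μ → S) → (Fin μ → S) → ℝ)
    (hPS0 : ∀ X Y Z, 0 ≤ PS X Y Z)
    (hPS1 : ∀ X Y, ∑ Z : Fin μ → S, PS X Y Z = 1)
    (hPS_src : ∀ X Y Z, 0 < PS X Y Z → ∀ i, (∃ j, Z i = X j) ∨ (∃ j, Z i = Y j))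
    (hPS_elite : ∀ X Y Z, 0 < PS X Y Z →
      (f (best X) < f (best Y) → best Z = best Y) ∧
      (¬ f (best X) < f (best Y) → best Z = best X))
    (hSnon : ∃ x : S, Snon f x)
    (xρ : S) (hxρ : Snon f xρ)
    (hxρmax : ∀ x, Snon f x → P1 f M x x ≤ P1 f M xρ xρ)
    (hnobridge : ∀ Z : Fin μ → S, (∀ i, Snon f (Z i)) → best Z = xρ →
      (¬ ∃ i, Bridgeable f M xρ (Z i)) →
      ∑ W ∈ Finset.univ.filter (fun W : Fin μ → S => ∃ i, Bridgeable f M xρ (W i)),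
        Pmu M PS Z W = 0) :
    1 - specRad (Qmu f M PS) ≤ (μ : ℝ) * (1 - P1 f M xρ xρ) ∧
      (μ : ℝ) * (1 - P1 f M xρ xρ) = (μ : ℝ) * (1 - specRad (Q1 f M)) :=
  stmt_11_general f M hM0 hM1 μ best hbest_mem hbest_max PS hPS0 hPS1 hPS_src hPS_elite xρ hxρ
    hxρmax hnobridge
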